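/- arXiv:1902.09372 — 6 statements merged into one kernel-verified Lean document; each statement's English description precedes it below -/
import Mathlib

section
/- Let θ* ∈ ℝ^p, φ ∈ ℝ^p nonzero, w ∈ ℝ, and y := φᵀθ* + w. Let θ̂ ∈ ℝ^p, e := y − φᵀθ̂, and θ̌ := θ̂ + (φ/‖φ‖²)·e. Then ‖θ̌ − θ*‖² ≤ ‖θ̂ − θ*‖² − (1/2)·e²/‖φ‖² + 2·w²/‖φ‖². -/
open scoped RealInnerProductSpace

theorem stmt_2 {p : ℕ} (θstar θhat θcheck φ : EuclideanSpace ℝ (Fin p))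
    (hφ : φ ≠ 0) (w y e : ℝ)
    (hy : y = ⟪φ, θstar⟫ + w)
    (he : e = y - ⟪φ, θhat⟫)
    (hcheck : θcheck = θhat + (e / ‖φ‖ ^ 2) • φ) :
    ‖θcheck - θstar‖ ^ 2 ≤
      ‖θhat - θstar‖ ^ 2 - (1 / 2) * e ^ 2 / ‖φ‖ ^ 2 + 2 * w ^ 2 / ‖φ‖ ^ 2 := by
  have hn : (0:ℝ) < ‖φ‖ ^ 2 := pow_pos (norm_pos_iff.mpr hφ) 2
  have hkey : θcheck - θstar = (θhat - θstar) + (e / ‖φ‖ ^ 2) • φ := by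
    rw [hcheck]; abel
  have ha : ⟪φ, θhat - θstar⟫ = ⟪φ, θhat⟫ - ⟪φ, θstar⟫ := inner_sub_right _ _ _
  have hea : e = w - ⟪φ, θhat - θstar⟫ := by rw [he, hy, ha]; ring
  rw [hkey, norm_add_sq_real, real_inner_smul_right, norm_smul, mul_pow,
    real_inner_comm]
  have habs : |e / ‖φ‖ ^ 2| ^ 2 * ‖φ‖ ^ 2 = e ^ 2 / ‖φ‖ ^ 2 := by
    rw [sq_abs]; field_simp
  rw [Real.norm_eq_abs, habs]
  set a := ⟪φ, θhat - θstar⟫ with hadef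
  have hae : a = w - e := by rw [hea]; ring
  have hsq : (0:ℝ) ≤ 2 * (w - e / 2) ^ 2 / ‖φ‖ ^ 2 := by positivity
  have hid : ‖θhat - θstar‖ ^ 2 - 1 / 2 * e ^ 2 / ‖φ‖ ^ 2 + 2 * w ^ 2 / ‖φ‖ ^ 2 -
      (‖θhat - θstar‖ ^ 2 + 2 * (e / ‖φ‖ ^ 2 * a) + e ^ 2 / ‖φ‖ ^ 2) =
      2 * (w - e / 2) ^ 2 / ‖φ‖ ^ 2 := by
    rw [hae]; field_simp; ring
  linarith
end

section
/- Let S ⊂ ℝ^p be convex and compact, θ* ∈ S, and let (φ(t))_{t≥0} be a sequence in ℝ^p, (w(t))_{t≥0} a real sequence, and y(t+1) := φ(t)ᵀθ* + w(t). Define θ̂(0) ∈ S and recursively e(t+1) := y(t+1) − φ(t)ᵀθ̂(t), θ̌(t+1) := θ̂(t) + ρ(t)·(φ(t)/‖φ(t)‖²)·e(t+1) (with ρ(t) ∈ {0,1} arbitrary and ρ(t)=0 whenever φ(t)=0), and θ̂(t+1) := π_S(θ̌(t+1)). Then for all T ≥ 0: ‖θ̂(T) − θ*‖² ≤ ‖θ̂(0)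 − θ*‖² + Σ_{t=0}^{T−1} ρ(t)·[ −(1/2)·e(t+1)²/‖φ(t)‖² + 2·w(t)²/‖φ(t)‖² ]. -/
open scoped RealInnerProductSpace

lemma proj_sq_le {E : Type*} [NormedAddCommGroup E] [InnerProductSpace ℝ E]
    {K : Set E} (h : Convex ℝ K) {u v z : E} (hv : v ∈ K) (hz : z ∈ K)
    (hmin : ∀ x ∈ K, ‖u - v‖ ≤ ‖u - x‖) : ‖v - z‖ ^ 2 ≤ ‖u - z‖ ^ 2 := by
  have hinf : ‖u - v‖ = ⨅ w : K, ‖u - w‖ := by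
    haveI : Nonempty K := ⟨⟨v, hv⟩⟩
    refine le_antisymm (le_ciInf fun w => hmin w w.2) ?_
    have hb : BddBelow (Set.range fun w : K => ‖u - (w : E)‖) :=
      ⟨0, by rintro x ⟨w, rfl⟩; exact norm_nonneg _⟩
    exact ciInf_le hb ⟨v, hv⟩
  have hineq := (norm_eq_iInf_iff_real_inner_le_zero h hv).mp hinf z hz
  have hexp : u - z = (u - v) + (v - z) := by abel
  have := @norm_add_sq_real _ _ _ (u - v) (v - z)
  rw [hexp, this]
  have h2 : ⟪u - v, v - z⟫ ≥ 0 := by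
    have : ⟪u - v, z - v⟫ = -⟪u - v, v - z⟫ := by
      rw [← inner_neg_right]; congr 1; abel
    linarith [hineq, this ▸ hineq]
  nlinarith [sq_nonneg ‖u - v‖]

theorem stmt_5 {p : ℕ} (S : Set (EuclideanSpace ℝ (Fin p)))
    (hconv : Convex ℝ S) (hcomp : IsCompact S)
    (θstar : EuclideanSpace ℝ (Fin p)) (hθstar : θstar ∈ S)
    (φ θhat θcheck : ℕ → EuclideanSpace ℝ (Fin p)) (w y e : ℕ → ℝ)
    (ρ : ℕ → ℝ) (hρ : ∀ t, ρ t = 0 ∨ ρ t = 1)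
    (hρ0 : ∀ t, φ t = 0 → ρ t = 0)
    (hy : ∀ t, y (t + 1) = ⟪φ t, θstar⟫ + w t)
    (hθ0 : θhat 0 ∈ S)
    (he : ∀ t, e (t + 1) = y (t + 1) - ⟪φ t, θhat t⟫)
    (hcheck : ∀ t, θcheck (t + 1) = θhat t + (ρ t * (e (t + 1) / ‖φ t‖ ^ 2)) • φ t)
    -- θhat (t+1) is the projection of θcheck (t+1) onto S
    (hproj : ∀ t, θhat (t + 1) ∈ S ∧
        ∀ z ∈ S, ‖θcheck (t + 1) - θhat (t + 1)‖ ≤ ‖θcheck (t + 1) - z‖) :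
    ∀ T : ℕ, ‖θhat T - θstar‖ ^ 2 ≤ ‖θhat 0 - θstar‖ ^ 2 +
      ∑ t ∈ Finset.range T,
        ρ t * (-(1 / 2) * e (t + 1) ^ 2 / ‖φ t‖ ^ 2 + 2 * w t ^ 2 / ‖φ t‖ ^ 2) := by
  intro T
  induction T with
  | zero => simp
  | succ T ih =>
    rw [Finset.sum_range_succ]
    have step : ‖θhat (T + 1) - θstar‖ ^ 2 ≤ ‖θhat T - θstar‖ ^ 2 +
        ρ T * (-(1 / 2) * e (T + 1) ^ 2 / ‖φ T‖ ^ 2 + 2 * w T ^ 2 / ‖φ T‖ ^ 2) := by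
      have hp := proj_sq_le hconv (hproj T).1 hθstar (hproj T).2
      refine hp.trans ?_
      rcases hρ T with h0 | h1
      · rw [hcheck T, h0]; simp
      · have hφ : φ T ≠ 0 := fun h => by simp [hρ0 T h] at h1
        have hn : (0:ℝ) < ‖φ T‖ ^ 2 := pow_pos (norm_pos_iff.mpr hφ) 2
        set c : ℝ := e (T + 1) / ‖φ T‖ ^ 2 with hc
        have hexp : θcheck (T + 1) - θstar = (θhat T - θstar) + c • φ T := by
          rw [hcheck T, h1]; simp; abel
        rw [hexp, @norm_add_sq_real]
        have hip : ⟪θhat T - θstar, c • φ T⟫ = c * (w T - e (T + 1)) := by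
          rw [real_inner_smul_right]
          have : ⟪θhat T - θstar, φ T⟫ = w T - e (T + 1) := by
            have h1 := he T
            rw [hy T] at h1
            have : ⟪θhat T - θstar, φ T⟫ = ⟪φ T, θhat T⟫ - ⟪φ T, θstar⟫ := by
              rw [real_inner_comm, inner_sub_right]
            linarith
          rw [this]
        have hns : ‖c • φ T‖ ^ 2 = c ^ 2 * ‖φ T‖ ^ 2 := by
          rw [norm_smul]; simp [mul_pow, sq_abs]
        rw [hip, hns, h1]
        have hne : (‖φ T‖ ^ 2) ≠ 0 := ne_of_gt hn
        have hcn : c * ‖φ T‖ ^ 2 = e (T + 1) := by rw [hc]; field_simp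
        have hkey : (2 * (c * (w T - e (T + 1))) + c ^ 2 * ‖φ T‖ ^ 2) * ‖φ T‖ ^ 2 ≤
            (-(1 / 2) * e (T + 1) ^ 2 / ‖φ T‖ ^ 2 + 2 * w T ^ 2 / ‖φ T‖ ^ 2) * ‖φ T‖ ^ 2 := by
          have hd : (-(1 / 2) * e (T + 1) ^ 2 / ‖φ T‖ ^ 2 + 2 * w T ^ 2 / ‖φ T‖ ^ 2) * ‖φ T‖ ^ 2
              = -(1 / 2) * e (T + 1) ^ 2 + 2 * w T ^ 2 := by field_simp
          have hl : (2 * (c * (w T - e (T + 1))) + c ^ 2 * ‖φ T‖ ^ 2) * ‖φ T‖ ^ 2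
              = 2 * e (T + 1) * (w T - e (T + 1)) + e (T + 1) ^ 2 := by
            rw [hc]; field_simp
          rw [hd, hl]
          nlinarith [sq_nonneg (e (T + 1) - 2 * w T)]
        have hkey' := (mul_le_mul_iff_of_pos_right hn).mp hkey
        linarith
    linarith
end

section
/- Suppose that in the noise-free case (w ≡ 0) the switched projection estimator is run with θ*, θ̂(0) ∈ S, ‖S‖ := max_{x∈S}‖x‖. Then Σ_{t=0}^{∞} ρ(t)·e(t+1)²/‖φ(t)‖² ≤ 8‖S‖², where terms with φ(t)=0 are zero. -/
/-!
The Lyapunov function `V t = ‖θ̂ t - θ*‖²` decreases along the estimator. The normalized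
gradient step `θ̌ = θ̂ + ρ e / ‖φ‖² • φ` with `e = ⟪φ, θ* - θ̂⟫` lowers it by exactly
`ρ (2 - ρ) e² / ‖φ‖² = ρ e² / ‖φ‖²` for `ρ ∈ {0, 1}`, and the projection onto the convex set
`S ∋ θ*` does not increase it. Telescoping bounds the series by `V 0 ≤ (2 ‖S‖)²`.
-/

open scoped RealInnerProductSpace

section

variable {F : Type*} [NormedAddCommGroup F] [InnerProductSpace ℝ F]

theorem Convex.norm_sub_le_of_isMinOn {S : Set F} (hS : Convex ℝ S) {u v w : F}
    (hv : v ∈ S) (hw : w ∈ S) (hmin : IsMinOn (fun z => ‖u - z‖) S v) :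
    ‖w - v‖ ≤ ‖w - u‖ := by
  have hinf : ‖u - v‖ = ⨅ z : S, ‖u - z‖ := by
    have : Nonempty S := ⟨⟨v, hv⟩⟩
    refine le_antisymm (le_ciInf fun z => isMinOn_iff.mp hmin z z.2) ?_
    exact ciInf_le ⟨0, fun _ ⟨_, hz⟩ => hz ▸ norm_nonneg _⟩ (⟨v, hv⟩ : S)
  have hobtuse : ⟪u - v, w - v⟫ ≤ 0 := (norm_eq_iInf_iff_real_inner_le_zero hS hv).mp hinf w hw
  have hsq : ‖w - v‖ ^ 2 ≤ ‖w - u‖ ^ 2 := by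
    have : w - u = (w - v) - (u - v) := by abel
    rw [this, norm_sub_sq_real (w - v), real_inner_comm]
    nlinarith [sq_nonneg ‖u - v‖]
  exact pow_le_pow_iff_left₀ (norm_nonneg _) (norm_nonneg _) two_ne_zero |>.mp hsq

theorem norm_add_normalizedStep_sub_sq (θ θ' φ : F) (μ : ℝ) :
    ‖θ + (μ * (⟪φ, θ' - θ⟫ / ‖φ‖ ^ 2)) • φ - θ'‖ ^ 2 =
      ‖θ - θ'‖ ^ 2 - μ * (2 - μ) * (⟪φ, θ' - θ⟫ ^ 2 / ‖φ‖ ^ 2) := by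
  rcases eq_or_ne φ 0 with rfl | hφ
  · simp
  have hφ2 : ‖φ‖ ^ 2 ≠ 0 := pow_ne_zero 2 (norm_ne_zero_iff.mpr hφ)
  have hinner : ⟪θ - θ', φ⟫ = -⟪φ, θ' - θ⟫ := by
    rw [real_inner_comm, ← inner_neg_right, neg_sub]
  have hsplit : θ + (μ * (⟪φ, θ' - θ⟫ / ‖φ‖ ^ 2)) • φ - θ' =
      (θ - θ') + (μ * (⟪φ, θ' - θ⟫ / ‖φ‖ ^ 2)) • φ := by abel
  rw [hsplit, norm_add_sq_real, inner_smul_right, hinner, norm_smul, mul_pow,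
    Real.norm_eq_abs, sq_abs]
  field_simp
  ring

end

theorem tsum_le_of_le_sub_succ {a V : ℕ → ℝ} (ha : ∀ t, 0 ≤ a t) (hV : ∀ t, 0 ≤ V t)
    (hdecr : ∀ t, a t ≤ V t - V (t + 1)) : ∑' t, a t ≤ V 0 := by
  refine Real.tsum_le_of_sum_range_le ha fun n => ?_
  calc ∑ t ∈ Finset.range n, a t ≤ ∑ t ∈ Finset.range n, (V t - V (t + 1)) :=
        Finset.sum_le_sum fun t _ => hdecr t
    _ = V 0 - V n := Finset.sum_range_sub' V n
    _ ≤ V 0 := sub_le_self _ (hV n)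

theorem stmt_7_general {p : ℕ} (S : Set (EuclideanSpace ℝ (Fin p)))
    (hconv : Convex ℝ S)
    (θstar : EuclideanSpace ℝ (Fin p)) (hθstar : θstar ∈ S)
    (nS : ℝ) (hnS : IsGreatest ((fun x => ‖x‖) '' S) nS)
    (φ θhat θcheck : ℕ → EuclideanSpace ℝ (Fin p)) (y e : ℕ → ℝ)
    (ρ : ℕ → ℝ) (hρ : ∀ t, ρ t = 0 ∨ ρ t = 1)
    -- noise-free plant
    (hy : ∀ t, y (t + 1) = ⟪φ t, θstar⟫)
    (hθ0 : θhat 0 ∈ S)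
    (he : ∀ t, e (t + 1) = y (t + 1) - ⟪φ t, θhat t⟫)
    (hcheck : ∀ t, θcheck (t + 1) = θhat t + (ρ t * (e (t + 1) / ‖φ t‖ ^ 2)) • φ t)
    (hproj : ∀ t, θhat (t + 1) ∈ S ∧
        ∀ z ∈ S, ‖θcheck (t + 1) - θhat (t + 1)‖ ≤ ‖θcheck (t + 1) - z‖) :
    ∑' t : ℕ, ρ t * (e (t + 1) ^ 2 / ‖φ t‖ ^ 2) ≤ 8 * nS ^ 2 := by
  set V : ℕ → ℝ := fun t => ‖θhat t - θstar‖ ^ 2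
  have hbound : ∀ x ∈ S, ‖x‖ ≤ nS := fun x hx => hnS.2 ⟨x, hx, rfl⟩
  have herr : ∀ t, e (t + 1) = ⟪φ t, θstar - θhat t⟫ := fun t => by
    rw [he, hy, inner_sub_right]
  have hdecr : ∀ t, ρ t * (e (t + 1) ^ 2 / ‖φ t‖ ^ 2) ≤ V t - V (t + 1) := fun t => by
    have hgain : ρ t * (2 - ρ t) = ρ t := by rcases hρ t with h | h <;> rw [h] <;> norm_num
    have hstep : ‖θcheck (t + 1) - θstar‖ ^ 2 = V t - ρ t * (e (t + 1) ^ 2 / ‖φ t‖ ^ 2) := by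
      rw [hcheck, herr, norm_add_normalizedStep_sub_sq, hgain]
    have hcloser : ‖θstar - θhat (t + 1)‖ ≤ ‖θstar - θcheck (t + 1)‖ :=
      hconv.norm_sub_le_of_isMinOn (hproj t).1 hθstar (isMinOn_iff.mpr (hproj t).2)
    rw [norm_sub_rev, norm_sub_rev θstar] at hcloser
    have := pow_le_pow_left₀ (norm_nonneg _) hcloser 2
    linarith
  have hV0 : V 0 ≤ 4 * nS ^ 2 := by
    have hdiam : ‖θhat 0 - θstar‖ ≤ 2 * nS := by
      linarith [norm_sub_le (θhat 0) θstar, hbound _ hθ0, hbound _ hθstar]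
    nlinarith [norm_nonneg (θhat 0 - θstar)]
  have hnonneg : ∀ t, 0 ≤ ρ t * (e (t + 1) ^ 2 / ‖φ t‖ ^ 2) := fun t => by
    rcases hρ t with h | h <;> rw [h] <;> positivity
  calc ∑' t, ρ t * (e (t + 1) ^ 2 / ‖φ t‖ ^ 2) ≤ V 0 :=
        tsum_le_of_le_sub_succ hnonneg (fun t => sq_nonneg _) hdecr
    _ ≤ 8 * nS ^ 2 := by nlinarith [sq_nonneg nS]

theorem stmt_7 {p : ℕ} (S : Set (EuclideanSpace ℝ (Fin p)))
    (hconv : Convex ℝ S) (hcomp : IsCompact S)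
    (θstar : EuclideanSpace ℝ (Fin p)) (hθstar : θstar ∈ S)
    (nS : ℝ) (hnS : IsGreatest ((fun x => ‖x‖) '' S) nS)
    (φ θhat θcheck : ℕ → EuclideanSpace ℝ (Fin p)) (y e : ℕ → ℝ)
    (ρ : ℕ → ℝ) (hρ : ∀ t, ρ t = 0 ∨ ρ t = 1)
    (hρ0 : ∀ t, φ t = 0 → ρ t = 0)
    -- noise-free plant
    (hy : ∀ t, y (t + 1) = ⟪φ t, θstar⟫)
    (hθ0 : θhat 0 ∈ S)
    (he : ∀ t, e (t + 1) = y (t + 1) - ⟪φ t, θhat t⟫)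
    (hcheck : ∀ t, θcheck (t + 1) = θhat t + (ρ t * (e (t + 1) / ‖φ t‖ ^ 2)) • φ t)
    (hproj : ∀ t, θhat (t + 1) ∈ S ∧
        ∀ z ∈ S, ‖θcheck (t + 1) - θhat (t + 1)‖ ≤ ‖θcheck (t + 1) - z‖) :
    ∑' t : ℕ, ρ t * (e (t + 1) ^ 2 / ‖φ t‖ ^ 2) ≤ 8 * nS ^ 2 :=
  stmt_7_general S hconv θstar hθstar nS hnS φ θhat θcheck y e ρ hρ hy hθ0 he hcheck hproj
end

section
/- Let γ₁ ≥ 1, let σ ∈ (0,1), and let A_nom ∈ ℝ^{n×n} satisfy ‖A_nom^i‖ ≤ γ₁σ^i for all i ≥ 0. Let Δ : ℤ → ℝ^{n×n} and let Φ(t,τ) denote the state transition matrix of x(t+1) = (A_nom + Δ(t))x(t), i.e. Φ(τ,τ) = I and Φ(t+1,τ) = (A_nom + Δ(t))Φ(t,τ). Suppose there exist β₀, β₁, β₂ ≥ 0 with Σ_{i=τ}^{t−1} ‖Δ(i)‖ ≤ β₀ + β₁(t−τ)^{1/2} + β₂(t−τ) for all t > τ, and suppose there exist μ ∈ (σ,1)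 and N ∈ ℕ with β₂ < (1/γ₁)(μ/γ₁^{1/N} − σ). Then there exists γ₂ > 0 such that ‖Φ(t,τ)‖ ≤ γ₂μ^{t−τ} for all t ≥ τ. -/
open Finset

lemma tele_aux (a : ℕ → ℝ) (k : ℕ) :
    ∏ j ∈ range k, (1 + a j) = 1 + ∑ i ∈ range k, a i * ∏ j ∈ range i, (1 + a j) := by
  induction k with
  | zero => simp
  | succ k ih => rw [prod_range_succ, sum_range_succ, ih]; ring

lemma amgm_aux (x : ℕ → ℝ) (hx : ∀ j, 0 ≤ x j) (k : ℕ) (hk : 0 < k) :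
    ∏ j ∈ range k, x j ≤ ((∑ j ∈ range k, x j) / k) ^ k := by
  have hk' : (0:ℝ) < k := by exact_mod_cast hk
  have h := Real.geom_mean_le_arith_mean_weighted (range k) (fun _ => 1 / k) x
    (fun i _ => by positivity)
    (by simp [Finset.sum_const]; field_simp)
    (fun i _ => hx i)
  have key : (∏ j ∈ range k, x j ^ ((1:ℝ)/k)) ^ k = ∏ j ∈ range k, x j := by
    rw [← Finset.prod_pow]
    refine Finset.prod_congr rfl fun j _ => ?_
    rw [← Real.rpow_natCast (x j ^ ((1:ℝ)/k)) k, ← Real.rpow_mul (hx j)]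
    field_simp
    simp
  calc ∏ j ∈ range k, x j = (∏ j ∈ range k, x j ^ ((1:ℝ)/k)) ^ k := key.symm
    _ ≤ (∑ i ∈ range k, (1/(k:ℝ)) * x i) ^ k := by
        apply pow_le_pow_left₀ (Finset.prod_nonneg fun j _ => Real.rpow_nonneg (hx j) _) h
    _ = ((∑ j ∈ range k, x j) / k) ^ k := by
        congr 1; rw [Finset.sum_div]; exact Finset.sum_congr rfl fun j _ => by ring

lemma reindex_aux (g : ℤ → ℝ) (τ : ℤ) (k : ℕ) :
    ∑ i ∈ Finset.Icc τ (τ + (k:ℤ) - 1), g i = ∑ j ∈ range k, g (τ + j) := by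
  have himg : Finset.Icc τ (τ + (k:ℤ) - 1) = Finset.image (fun j : ℕ => τ + (j:ℤ)) (range k) := by
    ext x
    simp only [Finset.mem_Icc, Finset.mem_image, Finset.mem_range]
    constructor
    · intro ⟨h1, h2⟩; exact ⟨(x - τ).toNat, by omega, by omega⟩
    · rintro ⟨j, hj, rfl⟩; omega
  rw [himg, Finset.sum_image (fun a _ b _ h => by omega)]

set_option maxHeartbeats 1000000 in
theorem stmt_9 {n : ℕ}
    (A : EuclideanSpace ℝ (Fin n) →L[ℝ] EuclideanSpace ℝ (Fin n))
    (γ₁ : ℝ) (hγ₁ : 1 ≤ γ₁) (σ : ℝ) (hσ : σ ∈ Set.Ioo (0 : ℝ) 1)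
    (hA : ∀ i : ℕ, ‖A ^ i‖ ≤ γ₁ * σ ^ i)
    (Δ : ℤ → (EuclideanSpace ℝ (Fin n) →L[ℝ] EuclideanSpace ℝ (Fin n)))
    (Φ : ℤ → ℤ → (EuclideanSpace ℝ (Fin n) →L[ℝ] EuclideanSpace ℝ (Fin n)))
    (hΦ₀ : ∀ τ : ℤ, Φ τ τ = ContinuousLinearMap.id ℝ (EuclideanSpace ℝ (Fin n)))
    (hΦ : ∀ τ t : ℤ, τ ≤ t → Φ (t + 1) τ = (A + Δ t).comp (Φ t τ))
    (β₀ β₁ β₂ : ℝ) (hβ₀ : 0 ≤ β₀) (hβ₁ : 0 ≤ β₁) (hβ₂ : 0 ≤ β₂)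
    (hsum : ∀ τ t : ℤ, τ < t →
      ∑ i ∈ Finset.Icc τ (t - 1), ‖Δ i‖ ≤
        β₀ + β₁ * Real.sqrt ((t - τ : ℤ) : ℝ) + β₂ * ((t - τ : ℤ) : ℝ))
    (μ : ℝ) (hμ : μ ∈ Set.Ioo σ 1) (N : ℕ) (hN : 0 < N)
    (hslow : β₂ < (1 / γ₁) * (μ / γ₁ ^ ((1 : ℝ) / N) - σ)) :
    ∃ γ₂ : ℝ, 0 < γ₂ ∧ ∀ τ t : ℤ, τ ≤ t → ‖Φ t τ‖ ≤ γ₂ * μ ^ (t - τ).toNat := by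
  obtain ⟨hσ0, hσ1⟩ := hσ
  obtain ⟨hμσ, hμ1⟩ := hμ
  have hγ₁0 : (0:ℝ) < γ₁ := lt_of_lt_of_le one_pos hγ₁
  have hμ0 : (0:ℝ) < μ := lt_trans hσ0 hμσ
  -- variation of constants
  have voc : ∀ (τ : ℤ) (k : ℕ), Φ (τ + k) τ =
      A ^ k + ∑ i ∈ range k, A ^ (k - 1 - i) * Δ (τ + i) * Φ (τ + i) τ := by
    intro τ k
    induction k with
    | zero => simpa [ContinuousLinearMap.one_def] using hΦ₀ τ
    | succ k ih =>
      have h1 : (τ + ((k:ℕ)+1 : ℕ) : ℤ) = (τ + k) + 1 := by push_cast; ring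
      have h2 : τ ≤ τ + (k:ℤ) := le_add_of_nonneg_right (Int.natCast_nonneg k)
      rw [h1, hΦ τ (τ + k) h2]
      have hcomp : (A + Δ (τ + (k:ℤ))).comp (Φ (τ + (k:ℤ)) τ)
          = A * Φ (τ + (k:ℤ)) τ + Δ (τ + (k:ℤ)) * Φ (τ + (k:ℤ)) τ := by
        rw [← add_mul]; rfl
      rw [hcomp]
      nth_rewrite 1 [ih]
      rw [mul_add, Finset.mul_sum, sum_range_succ]
      have hsum_eq : ∀ i ∈ range k,
          A * (A ^ (k - 1 - i) * Δ (τ + i) * Φ (τ + i) τ)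
            = A ^ (k + 1 - 1 - i) * Δ (τ + i) * Φ (τ + i) τ := by
        intro i hi
        have hi' : i < k := mem_range.mp hi
        have he : k + 1 - 1 - i = (k - 1 - i) + 1 := by omega
        rw [he, pow_succ']
        simp only [mul_assoc]
      rw [Finset.sum_congr rfl hsum_eq]
      have hlast : A ^ (k + 1 - 1 - k) = 1 := by
        rw [show k + 1 - 1 - k = 0 by omega, pow_zero]
      rw [hlast, one_mul, ← pow_succ']
      push_cast
      abel
  -- Gronwall-type product bound
  have gron : ∀ (τ : ℤ) (k : ℕ), ‖Φ (τ + k) τ‖ ≤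
      γ₁ * σ ^ k * ∏ j ∈ range k, (1 + γ₁ * ‖Δ (τ + j)‖ / σ) := by
    intro τ k
    induction k using Nat.strong_induction_on with
    | _ k ih =>
      rw [voc τ k]
      calc ‖A ^ k + ∑ i ∈ range k, A ^ (k - 1 - i) * Δ (τ + i) * Φ (τ + i) τ‖
          ≤ ‖A ^ k‖ + ∑ i ∈ range k, ‖A ^ (k - 1 - i) * Δ (τ + i) * Φ (τ + i) τ‖ :=
            le_trans (norm_add_le _ _) (add_le_add le_rfl (norm_sum_le _ _))
        _ ≤ γ₁ * σ ^ k + ∑ i ∈ range k,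
              (γ₁ * σ ^ (k - 1 - i)) * ‖Δ (τ + i)‖ *
                (γ₁ * σ ^ i * ∏ j ∈ range i, (1 + γ₁ * ‖Δ (τ + j)‖ / σ)) := by
            refine add_le_add (hA k) (Finset.sum_le_sum fun i hi => ?_)
            refine le_trans (norm_mul_le _ _) ?_
            refine le_trans (mul_le_mul_of_nonneg_right (norm_mul_le _ _) (norm_nonneg _)) ?_
            refine mul_le_mul (mul_le_mul_of_nonneg_right (hA _) (norm_nonneg _))
              (ih i (mem_range.mp hi)) (norm_nonneg _) ?_
            exact mul_nonneg (mul_nonneg hγ₁0.le (pow_nonneg hσ0.le _)) (norm_nonneg _)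
        _ = γ₁ * σ ^ k * (1 + ∑ i ∈ range k,
              (γ₁ * ‖Δ (τ + i)‖ / σ) * ∏ j ∈ range i, (1 + γ₁ * ‖Δ (τ + j)‖ / σ)) := by
            rw [mul_add, mul_one, Finset.mul_sum]
            congr 1
            refine Finset.sum_congr rfl fun i hi => ?_
            have hik : i < k := mem_range.mp hi
            have e1 : σ ^ (k - 1 - i) * σ ^ i = σ ^ (k-1) := by
              rw [← pow_add]; congr 1; omega
            have e2 : σ ^ k = σ ^ (k-1) * σ := by rw [← pow_succ]; congr 1; omega
            have key : ∀ d P : ℝ, (γ₁ * σ ^ (k - 1 - i)) * d * (γ₁ * σ ^ i * P)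
                = γ₁ * σ ^ k * ((γ₁ * d / σ) * P) := by
              intro d P
              rw [e2, ← e1]
              field_simp
            exact key _ _
        _ = γ₁ * σ ^ k * ∏ j ∈ range k, (1 + γ₁ * ‖Δ (τ + j)‖ / σ) := by
            rw [tele_aux]
  -- sum bound on the perturbations
  have hSsum : ∀ (τ : ℤ) (k : ℕ), 0 < k →
      ∑ j ∈ range k, ‖Δ (τ + j)‖ ≤ β₀ + β₁ * Real.sqrt k + β₂ * k := by
    intro τ k hk
    have hlt : τ < τ + (k:ℤ) := by omega
    have h := hsum τ (τ + k) hlt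
    rw [show (τ + (k:ℤ) - τ) = (k:ℤ) by ring] at h
    have hre : ∑ j ∈ range k, ‖Δ (τ + (j:ℤ))‖ = ∑ i ∈ Finset.Icc τ (τ + (k:ℤ) - 1), ‖Δ i‖ :=
      (reindex_aux (fun i => ‖Δ i‖) τ k).symm
    rw [hre]
    exact_mod_cast h
  -- the per-step bound B
  set ε : ℕ → ℝ := fun k => γ₁ * (β₀ + β₁ * Real.sqrt k) / k with hε
  set ρ : ℝ := σ + γ₁ * β₂ with hρ
  have hρ0 : 0 < ρ := by
    have := mul_nonneg hγ₁0.le hβ₂; rw [hρ]; linarith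
  have hε0 : ∀ k, 0 ≤ ε k := fun k =>
    div_nonneg (mul_nonneg hγ₁0.le
      (add_nonneg hβ₀ (mul_nonneg hβ₁ (Real.sqrt_nonneg _)))) (Nat.cast_nonneg k)
  set B : ℕ → ℝ := fun k => γ₁ * (ρ + ε k) ^ k with hB
  have hB0 : ∀ k, 0 ≤ B k := fun k =>
    mul_nonneg hγ₁0.le (pow_nonneg (add_nonneg hρ0.le (hε0 k)) k)
  have hmain : ∀ (τ : ℤ) (k : ℕ), ‖Φ (τ + k) τ‖ ≤ B k := by
    intro τ k
    rcases Nat.eq_zero_or_pos k with rfl | hk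
    · have g0 := gron τ 0
      simp only [pow_zero, range_zero, prod_empty, mul_one] at g0
      have hb0 : B 0 = γ₁ := by simp [hB]
      rw [hb0]
      exact g0
    · have hk0 : 0 < k := hk
      have hk' : (0:ℝ) < k := by exact_mod_cast hk0
      have hOneAdd : ∀ j : ℕ, (0:ℝ) ≤ 1 + γ₁ * ‖Δ (τ + j)‖ / σ := fun j => by
        have : 0 ≤ γ₁ * ‖Δ (τ + j)‖ / σ :=
          div_nonneg (mul_nonneg hγ₁0.le (norm_nonneg _)) hσ0.le
        linarith
      have hprod := amgm_aux (fun j => 1 + γ₁ * ‖Δ (τ + j)‖ / σ) hOneAdd k hk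
      have hsumx : ∑ j ∈ range k, (1 + γ₁ * ‖Δ (τ + j)‖ / σ)
          = k + (γ₁ / σ) * ∑ j ∈ range k, ‖Δ (τ + j)‖ := by
        rw [Finset.sum_add_distrib, Finset.sum_const, card_range, nsmul_eq_mul,
          mul_one, Finset.mul_sum]
        congr 1
        exact Finset.sum_congr rfl fun j _ => by ring
      have hS := hSsum τ k hk
      have hbase : σ * ((∑ j ∈ range k, (1 + γ₁ * ‖Δ (τ + j)‖ / σ)) / k) ≤ ρ + ε k := by
        rw [hsumx]
        have heq : ∀ S : ℝ, σ * (((k:ℝ) + (γ₁ / σ) * S) / k)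
            = σ + γ₁ * S / k := by
          intro S
          field_simp
        rw [heq]
        have h1 : γ₁ * (∑ j ∈ range k, ‖Δ (τ + j)‖) / k
            ≤ γ₁ * (β₀ + β₁ * Real.sqrt k + β₂ * k) / k := by
          exact (div_le_div_iff_of_pos_right hk').mpr (mul_le_mul_of_nonneg_left hS hγ₁0.le)
        have h2 : γ₁ * (β₀ + β₁ * Real.sqrt k + β₂ * k) / k
            = γ₁ * β₂ + γ₁ * (β₀ + β₁ * Real.sqrt k) / k := by
          field_simp
          ring
        rw [h2] at h1
        rw [hρ, hε]
        linarith
      have hbase0 : 0 ≤ σ * ((∑ j ∈ range k, (1 + γ₁ * ‖Δ (τ + j)‖ / σ)) / k) :=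
        mul_nonneg hσ0.le (div_nonneg (Finset.sum_nonneg fun j _ => hOneAdd j) hk'.le)
      calc ‖Φ (τ + k) τ‖ ≤ γ₁ * σ ^ k * ∏ j ∈ range k, (1 + γ₁ * ‖Δ (τ + j)‖ / σ) :=
            gron τ k
        _ ≤ γ₁ * σ ^ k * (((∑ j ∈ range k, (1 + γ₁ * ‖Δ (τ + j)‖ / σ)) / k) ^ k) :=
            mul_le_mul_of_nonneg_left hprod (mul_nonneg hγ₁0.le (pow_nonneg hσ0.le k))
        _ = γ₁ * (σ * ((∑ j ∈ range k, (1 + γ₁ * ‖Δ (τ + j)‖ / σ)) / k)) ^ k := by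
            rw [mul_pow]; ring
        _ ≤ B k :=
            mul_le_mul_of_nonneg_left (pow_le_pow_left₀ hbase0 hbase k) hγ₁0.le
  -- the gap δ
  have hrpow1 : (1:ℝ) ≤ γ₁ ^ ((1:ℝ)/N) := Real.one_le_rpow hγ₁ (by positivity)
  have hδ0 : ρ < μ := by
    have h1 : γ₁ * β₂ < μ / γ₁ ^ ((1:ℝ)/N) - σ := by
      have h := (mul_lt_mul_iff_right₀ hγ₁0).mpr hslow
      rwa [show γ₁ * ((1/γ₁) * (μ / γ₁ ^ ((1:ℝ)/N) - σ)) = μ / γ₁ ^ ((1:ℝ)/N) - σ by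
        field_simp] at h
    have h2 : μ / γ₁ ^ ((1:ℝ)/N) ≤ μ := div_le_self hμ0.le hrpow1
    rw [hρ]; linarith
  set δ : ℝ := μ - ρ with hδ
  have hδpos : 0 < δ := by rw [hδ]; linarith
  set c : ℝ := γ₁ * (β₀ + β₁) / δ with hc
  have hc0 : 0 ≤ c :=
    div_nonneg (mul_nonneg hγ₁0.le (add_nonneg hβ₀ hβ₁)) hδpos.le
  set K : ℕ := ⌈c^2⌉₊ + 1 with hK
  have hKbound : ∀ k : ℕ, K ≤ k → ε k ≤ δ := by
    intro k hkK
    have hk1 : 1 ≤ k := by omega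
    have hk' : (0:ℝ) < k := by exact_mod_cast hk1
    have hsq1 : (1:ℝ) ≤ Real.sqrt k := by
      rw [show (1:ℝ) = Real.sqrt 1 by rw [Real.sqrt_one]]
      exact Real.sqrt_le_sqrt (by exact_mod_cast hk1)
    have hsqpos : 0 < Real.sqrt k := lt_of_lt_of_le one_pos hsq1
    have hsqk : c ≤ Real.sqrt k := by
      have h1 : c^2 ≤ (k:ℝ) := by
        calc c^2 ≤ (⌈c^2⌉₊ : ℝ) := Nat.le_ceil _
          _ ≤ (K:ℝ) := by exact_mod_cast Nat.le_succ _
          _ ≤ (k:ℝ) := by exact_mod_cast hkK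
      calc c = Real.sqrt (c^2) := (Real.sqrt_sq hc0).symm
        _ ≤ Real.sqrt k := Real.sqrt_le_sqrt h1
    have hss : Real.sqrt k * Real.sqrt k = (k:ℝ) := Real.mul_self_sqrt hk'.le
    have step1 : ε k ≤ γ₁ * (β₀ + β₁) * Real.sqrt k / k := by
      rw [hε]
      refine (div_le_div_iff_of_pos_right hk').mpr ?_
      nlinarith [mul_nonneg (mul_nonneg hγ₁0.le hβ₀) (sub_nonneg.mpr hsq1)]
    have step2 : γ₁ * (β₀ + β₁) * Real.sqrt k / k = γ₁ * (β₀ + β₁) / Real.sqrt k := by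
      rw [div_eq_div_iff hk'.ne' hsqpos.ne', mul_assoc, hss]
    have step3 : γ₁ * (β₀ + β₁) / Real.sqrt k ≤ δ := by
      rw [div_le_iff₀ hsqpos]
      calc γ₁ * (β₀ + β₁) = c * δ := by
            rw [hc, div_mul_cancel₀ _ hδpos.ne']
        _ ≤ Real.sqrt k * δ := mul_le_mul_of_nonneg_right hsqk hδpos.le
        _ = δ * Real.sqrt k := by ring
    rw [step2] at step1
    exact le_trans step1 step3
  -- choose γ₂
  have hsum0 : 0 ≤ ∑ j ∈ range K, B j / μ ^ j :=
    Finset.sum_nonneg fun j _ => div_nonneg (hB0 j) (pow_nonneg hμ0.le j)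
  refine ⟨γ₁ + ∑ j ∈ range K, B j / μ ^ j, by linarith, ?_⟩
  have hBle : ∀ k : ℕ, B k ≤ (γ₁ + ∑ j ∈ range K, B j / μ ^ j) * μ ^ k := by
    intro k
    rcases le_or_gt K k with hKk | hKk
    · have hb : ρ + ε k ≤ μ := by
        have := hKbound k hKk
        rw [hδ] at this
        linarith
      calc B k = γ₁ * (ρ + ε k) ^ k := rfl
        _ ≤ γ₁ * μ ^ k :=
            mul_le_mul_of_nonneg_left
              (pow_le_pow_left₀ (add_nonneg hρ0.le (hε0 k)) hb k) hγ₁0.le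
        _ ≤ (γ₁ + ∑ j ∈ range K, B j / μ ^ j) * μ ^ k :=
            mul_le_mul_of_nonneg_right (by linarith) (pow_nonneg hμ0.le k)
    · have hk' : k ∈ range K := mem_range.mpr hKk
      have h1 : B k / μ ^ k ≤ ∑ j ∈ range K, B j / μ ^ j :=
        Finset.single_le_sum (fun j _ => div_nonneg (hB0 j) (pow_nonneg hμ0.le j)) hk'
      have h2 : B k = (B k / μ ^ k) * μ ^ k :=
        (div_mul_cancel₀ _ (pow_ne_zero k hμ0.ne')).symm
      rw [h2]
      refine mul_le_mul_of_nonneg_right ?_ (pow_nonneg hμ0.le k)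
      linarith
  intro τ t hτt
  set k : ℕ := (t - τ).toNat with hk
  have ht : t = τ + (k:ℤ) := by omega
  rw [ht]
  exact le_trans (hmain τ k) (hBle k)
end

section
/- Consider sequences y, u, w : ℤ → ℝ satisfying Σ_{i=0}^{n} a_i y(t−i) = Σ_{i=0}^{m} b_i u(t−d−i) + w(t) for all t, with a₀ = 1. Let F, G be the unique polynomials with F of degree ≤ d−1, G of degree ≤ n−1, and 1 = F(z^{−1})A(z^{−1}) + z^{−d}G(z^{−1}). Define β(z^{−1}) := F(z^{−1})B(z^{−1}) = Σ_{i=0}^{m+d−1} β_i z^{−i}, α(z^{−1}) := G(z^{−1}) = Σ_{i=0}^{n−1} α_i z^{−i}, and w̄(t) := Σ_{i=0}^{d−1} f_i w(t+d−i). Then for all t: y(t+d) = Σ_{i=0}^{n−1} α_i y(t−i) + Σ_{i=0}^{m+d−1} β_i u(t−i) + w̄(t). Moreover β₀ = b₀. -/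
open Polynomial

lemma helper_filter (N : ℕ) (g : ℕ × ℕ → ℝ) :
    ∑ k ∈ Finset.range N, ∑ x ∈ Finset.HasAntidiagonal.antidiagonal k, g x
      = ∑ x ∈ (Finset.range N ×ˢ Finset.range N).filter (fun x => x.1 + x.2 < N), g x := by
  rw [← Finset.sum_biUnion]
  · congr 1
    ext x
    simp only [Finset.mem_biUnion, Finset.mem_range, Finset.HasAntidiagonal.mem_antidiagonal,
      Finset.mem_filter, Finset.mem_product]
    constructor
    · rintro ⟨k, hk, rfl⟩; omega
    · rintro ⟨⟨h1, h2⟩, h3⟩; exact ⟨x.1 + x.2, h3, rfl⟩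
  · intro a _ b _ hab
    apply Finset.disjoint_left.mpr
    intro x hx hx2
    rw [Finset.HasAntidiagonal.mem_antidiagonal] at hx hx2
    exact hab (hx ▸ hx2)

lemma helper_conv (P Q : Polynomial ℝ) (p q : ℕ)
    (hP : ∀ j, p ≤ j → P.coeff j = 0) (hQ : ∀ i, q ≤ i → Q.coeff i = 0) (v : ℕ → ℝ) :
    ∑ j ∈ Finset.range p, ∑ i ∈ Finset.range q, P.coeff j * Q.coeff i * v (j + i)
      = ∑ k ∈ Finset.range (p + q), (P * Q).coeff k * v k := by
  have hR : ∀ k, (P*Q).coeff k * v k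
      = ∑ x ∈ Finset.HasAntidiagonal.antidiagonal k, P.coeff x.1 * Q.coeff x.2 * v (x.1 + x.2) := by
    intro k
    rw [Polynomial.coeff_mul, Finset.sum_mul]
    refine Finset.sum_congr rfl fun x hx => ?_
    rw [Finset.HasAntidiagonal.mem_antidiagonal] at hx
    rw [hx]
  simp_rw [hR]
  rw [helper_filter (p+q) (fun x => P.coeff x.1 * Q.coeff x.2 * v (x.1+x.2)),
    Finset.sum_filter, Finset.sum_product]
  symm
  rw [Finset.sum_subset (Finset.range_subset_range.mpr (Nat.le_add_right p q))
    (fun j _ hj => Finset.sum_eq_zero (fun i _ => by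
      rw [Finset.mem_range, not_lt] at hj
      simp [hP j hj]))]
  refine Finset.sum_congr rfl fun j hj => ?_
  rw [Finset.mem_range] at hj
  rw [Finset.sum_subset (Finset.range_subset_range.mpr (by omega : q ≤ p + q))
    (fun i _ hi => by
      rw [Finset.mem_range, not_lt] at hi
      simp [hQ i (by omega)])]
  refine Finset.sum_congr rfl fun i hi => ?_
  rw [Finset.mem_range] at hi
  by_cases h : j + i < p + q
  · rw [if_pos h]
  · rw [if_neg h]
    rcases (by omega : p ≤ j ∨ q ≤ i) with h' | h'
    · rw [hP j h', zero_mul, zero_mul]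
    · rw [hQ i h', mul_zero, zero_mul]

lemma helper_split (c d : ℕ) (h : ℕ → ℝ) :
    ∑ k ∈ Finset.range (d + c), h k
      = ∑ k ∈ Finset.range d, h k + ∑ i ∈ Finset.range c, h (d + i) := by
  induction c with
  | zero => simp
  | succ c ih =>
    rw [show d + (c + 1) = (d + c) + 1 from rfl, Finset.sum_range_succ, ih,
      Finset.sum_range_succ]
    ring

theorem stmt_13 (n m d : ℕ) (hd : 1 ≤ d)
    (A B F G : Polynomial ℝ)
    (hA0 : A.coeff 0 = 1) (hAdeg : A.natDegree ≤ n) (hBdeg : B.natDegree ≤ m)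
    (hFdeg : F.degree < (d : ℕ)) (hGdeg : G.degree < (n : ℕ))
    (hdiv : (1 : Polynomial ℝ) = F * A + X ^ d * G)
    (y u w : ℤ → ℝ)
    (hplant : ∀ t : ℤ,
      ∑ i ∈ Finset.range (n + 1), A.coeff i * y (t - i) =
        ∑ i ∈ Finset.range (m + 1), B.coeff i * u (t - d - i) + w t)
    (wbar : ℤ → ℝ)
    (hwbar : ∀ t : ℤ, wbar t = ∑ i ∈ Finset.range d, F.coeff i * w (t + d - i)) :
    (∀ t : ℤ, y (t + d) =
        ∑ i ∈ Finset.range n, G.coeff i * y (t - i) +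
          ∑ i ∈ Finset.range (m + d), (F * B).coeff i * u (t - i) + wbar t) ∧
    (F * B).coeff 0 = B.coeff 0 := by

  have hFc : ∀ j, d ≤ j → F.coeff j = 0 := fun j hj =>
    Polynomial.coeff_eq_zero_of_degree_lt (lt_of_lt_of_le hFdeg (by exact_mod_cast hj))
  have hAc : ∀ i, n + 1 ≤ i → A.coeff i = 0 := fun i hi =>
    Polynomial.coeff_eq_zero_of_natDegree_lt (by omega)
  have hBc : ∀ i, m + 1 ≤ i → B.coeff i = 0 := fun i hi =>
    Polynomial.coeff_eq_zero_of_natDegree_lt (by omega)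
  have hGc : G.coeff n = 0 := Polynomial.coeff_eq_zero_of_degree_lt hGdeg
  have hF0 : F.coeff 0 = 1 := by
    have h0 := congrArg (fun P => Polynomial.coeff P 0) hdiv
    simp only [Polynomial.coeff_one, Polynomial.coeff_add, Polynomial.mul_coeff_zero,
      Polynomial.coeff_X_pow, hA0, if_pos rfl, if_neg (by omega : ¬ (0 = d)),
      zero_mul, add_zero, mul_one] at h0
    exact h0.symm
  have hFA : F * A = 1 - X ^ d * G := by linear_combination -hdiv
  have hFAc : ∀ k, (F * A).coeff k
      = (if k = 0 then (1:ℝ) else 0) - (if d ≤ k then G.coeff (k - d) else 0) := by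
    intro k
    rw [hFA, Polynomial.coeff_sub, Polynomial.coeff_one, mul_comm (X ^ d) G,
      Polynomial.coeff_mul_X_pow']
  have hFB0 : (F * B).coeff 0 = B.coeff 0 := by
    rw [Polynomial.mul_coeff_zero, hF0, one_mul]
  refine ⟨fun t => ?_, hFB0⟩
  have H : ∑ j ∈ Finset.range d, F.coeff j *
        ∑ i ∈ Finset.range (n + 1), A.coeff i * y (t + d - j - i)
      = ∑ j ∈ Finset.range d, F.coeff j *
          ∑ i ∈ Finset.range (m + 1), B.coeff i * u (t - j - i) + wbar t := by
    rw [hwbar, ← Finset.sum_add_distrib]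
    refine Finset.sum_congr rfl fun j hj => ?_
    rw [← mul_add]
    congr 1
    rw [hplant (t + (d:ℤ) - (j:ℤ))]
    congr 1
    refine Finset.sum_congr rfl fun i _ => ?_
    congr 1
    ring
  have hL : ∑ j ∈ Finset.range d, F.coeff j *
        ∑ i ∈ Finset.range (n + 1), A.coeff i * y (t + d - j - i)
      = y (t + d) - ∑ i ∈ Finset.range n, G.coeff i * y (t - i) := by
    have e1 : ∀ j ∈ Finset.range d, F.coeff j *
          ∑ i ∈ Finset.range (n + 1), A.coeff i * y (t + d - j - i)
        = ∑ i ∈ Finset.range (n + 1), F.coeff j * A.coeff i *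
            (fun k : ℕ => y (t + d - k)) (j + i) := by
      intro j _
      rw [Finset.mul_sum]
      refine Finset.sum_congr rfl fun i _ => ?_
      rw [← mul_assoc]
      congr 1
      push_cast
      ring
    rw [Finset.sum_congr rfl e1,
      helper_conv F A d (n + 1) hFc hAc (fun k => y (t + d - k)),
      helper_split (n + 1) d (fun k => (F * A).coeff k * y (t + d - k))]
    have hfirst : ∑ k ∈ Finset.range d, (F * A).coeff k * y (t + d - (k : ℕ)) = y (t + d) := by
      rw [Finset.sum_eq_single 0]
      · rw [hFAc 0, if_pos rfl, if_neg (by omega : ¬ d ≤ 0)]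
        norm_num
      · intro k hk hk0
        rw [Finset.mem_range] at hk
        rw [hFAc k, if_neg hk0, if_neg (by omega : ¬ d ≤ k)]
        norm_num
      · intro h0
        exact absurd (Finset.mem_range.mpr (by omega)) h0
    have hsecond : ∑ i ∈ Finset.range (n + 1), (F * A).coeff (d + i) * y (t + d - ((d + i : ℕ) : ℤ))
        = -∑ i ∈ Finset.range n, G.coeff i * y (t - i) := by
      have e2 : ∀ i ∈ Finset.range (n + 1),
          (F * A).coeff (d + i) * y (t + d - ((d + i : ℕ) : ℤ))
            = -(G.coeff i * y (t - i)) := by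
        intro i _
        rw [hFAc (d + i), if_neg (by omega : ¬ d + i = 0), if_pos (by omega : d ≤ d + i),
          (by omega : d + i - d = i)]
        have : (t + (d : ℤ) - ((d + i : ℕ) : ℤ)) = t - i := by push_cast; ring
        rw [this]
        ring
      rw [Finset.sum_congr rfl e2, Finset.sum_range_succ, hGc]
      simp [Finset.sum_neg_distrib]
    rw [hfirst, hsecond]
    ring
  have hRu : ∑ j ∈ Finset.range d, F.coeff j *
        ∑ i ∈ Finset.range (m + 1), B.coeff i * u (t - j - i)
      = ∑ i ∈ Finset.range (m + d), (F * B).coeff i * u (t - i) := by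
    have e1 : ∀ j ∈ Finset.range d, F.coeff j *
          ∑ i ∈ Finset.range (m + 1), B.coeff i * u (t - j - i)
        = ∑ i ∈ Finset.range (m + 1), F.coeff j * B.coeff i *
            (fun k : ℕ => u (t - k)) (j + i) := by
      intro j _
      rw [Finset.mul_sum]
      refine Finset.sum_congr rfl fun i _ => ?_
      rw [← mul_assoc]
      congr 1
      push_cast
      ring
    have hFBtop : (F * B).coeff (m + d) = 0 := by
      rw [Polynomial.coeff_mul]
      refine Finset.sum_eq_zero fun x hx => ?_
      rw [Finset.HasAntidiagonal.mem_antidiagonal] at hx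
      by_cases h : d ≤ x.1
      · rw [hFc x.1 h, zero_mul]
      · rw [hBc x.2 (by omega), mul_zero]
    rw [Finset.sum_congr rfl e1,
      helper_conv F B d (m + 1) hFc hBc (fun k => u (t - k)),
      (by omega : d + (m + 1) = (m + d) + 1), Finset.sum_range_succ, hFBtop]
    simp
  rw [hL] at H
  rw [hRu] at H
  linarith [H]
end

section
/- Let d ≥ 1 and let ε, e : ℤ → ℝ, φ : ℤ → ℝ^p, and θ̂ : ℤ → ℝ^p satisfy ε(t) = e(t) + φ(t−d)ᵀ(θ̂(t−1) − θ̂(t−d)) and ‖θ̂(s+1) − θ̂(s)‖ ≤ ρ(s)·|e(s+1)|/‖φ(s−d+1)‖ for all s, where ρ(s) ∈ {0,1} and ρ(s) = 0 whenever φ(s−d+1) = 0. Then whenever φ(t−d) ≠ 0: |ε(t)|/‖φ(t−d)‖ ≤ Σ_{j=0}^{d−1} ρ(t−j−1)·|e(t−j)|/‖φ(t−d−j)‖ + (1−ρ(t−1))·|e(t)|/‖φ(t−d)‖, and in particular if ρ(t−j−1)=1 whenever φ(t−d−j) ≠ 0, then |ε(t)|²/‖φ(t−d)‖² ≤ d·Σ_{j=0,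 φ(t−d−j)≠0}^{d−1} |e(t−j)|²/‖φ(t−d−j)‖². -/
/-!
Expanding `ε t` through its defining identity, Cauchy–Schwarz for the inner product gives
`|ε t| / ‖φ (t - d)‖ ≤ |e t| / ‖φ (t - d)‖ + ‖θ̂ (t - 1) - θ̂ (t - d)‖`, and the last norm is at
most the sum of the `d - 1` step bounds of the estimator between times `t - d` and `t - 1`.
When every active step has `ρ = 1`, squaring and the Cauchy–Schwarz inequality
`(∑ x)² ≤ d ∑ x²` give the second bound; a term with `φ (t - d - j) = 0` vanishes because
division by zero is zero in Lean.
-/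

open scoped RealInnerProductSpace Classical

open Finset

theorem norm_sub_le_sum_of_step_le {E : Type*} [SeminormedAddCommGroup E] {f : ℤ → E}
    {b : ℤ → ℝ} (hf : ∀ s, ‖f (s + 1) - f s‖ ≤ b s) (a : ℤ) (n : ℕ) :
    ‖f a - f (a - n)‖ ≤ ∑ k ∈ range n, b (a - k - 1) := by
  induction n with
  | zero => simp
  | succ n ih =>
    have hlast : ‖f (a - n) - f (a - (n + 1 : ℕ))‖ ≤ b (a - n - 1) := by
      simpa [sub_add_eq_sub_sub] using hf (a - n - 1)
    calc ‖f a - f (a - (n + 1 : ℕ))‖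
        ≤ ‖f a - f (a - n)‖ + ‖f (a - n) - f (a - (n + 1 : ℕ))‖ :=
          norm_sub_le_norm_sub_add_norm_sub _ _ _
      _ ≤ ∑ k ∈ range (n + 1), b (a - k - 1) := by
          rw [sum_range_succ]
          exact add_le_add ih hlast

theorem abs_add_inner_div_norm_le {E : Type*} [NormedAddCommGroup E] [InnerProductSpace ℝ E]
    (c : ℝ) (v w : E) : |c + ⟪v, w⟫| / ‖v‖ ≤ |c| / ‖v‖ + ‖w‖ := by
  rcases eq_or_ne v 0 with rfl | hv
  · simp
  have hv' : 0 < ‖v‖ := norm_pos_iff.mpr hv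
  calc |c + ⟪v, w⟫| / ‖v‖ ≤ (|c| + ‖v‖ * ‖w‖) / ‖v‖ := by
        gcongr
        exact (abs_add_le _ _).trans (add_le_add_right (abs_real_inner_le_norm v w) _)
    _ = |c| / ‖v‖ + ‖w‖ := by field_simp

theorem sq_le_card_mul_sum_of_le_sum {ι : Type*} (s : Finset ι) {a : ℝ} {x y : ι → ℝ}
    (ha : 0 ≤ a) (hax : a ≤ ∑ i ∈ s, x i) (hxy : ∀ i ∈ s, x i ^ 2 ≤ y i) :
    a ^ 2 ≤ #s * ∑ i ∈ s, y i :=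
  calc a ^ 2 ≤ (∑ i ∈ s, x i) ^ 2 := pow_le_pow_left₀ ha hax 2
    _ ≤ #s * ∑ i ∈ s, x i ^ 2 := sq_sum_le_card_mul_sum_sq
    _ ≤ #s * ∑ i ∈ s, y i := by gcongr with i hi; exact hxy i hi

theorem stmt_15_general {p : ℕ} (d : ℕ) (hd : 1 ≤ d)
    (φ θhat : ℤ → EuclideanSpace ℝ (Fin p))
    (ε e : ℤ → ℝ) (ρ : ℤ → ℝ)
    (hε : ∀ t : ℤ, ε t = e t + ⟪φ (t - d), θhat (t - 1) - θhat (t - d)⟫)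
    (hstep : ∀ s : ℤ, ‖θhat (s + 1) - θhat s‖ ≤ ρ s * (|e (s + 1)| / ‖φ (s - d + 1)‖)) :
    ∀ t : ℤ, φ (t - d) ≠ 0 →
      (|ε t| / ‖φ (t - d)‖ ≤
        (∑ j ∈ Finset.range d, ρ (t - j - 1) * (|e (t - j)| / ‖φ (t - d - j)‖)) +
          (1 - ρ (t - 1)) * (|e t| / ‖φ (t - d)‖)) ∧
      ((∀ j ∈ Finset.range d, φ (t - d - j) ≠ 0 → ρ (t - j - 1) = 1) →
        ε t ^ 2 / ‖φ (t - d)‖ ^ 2 ≤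
          d * ∑ j ∈ Finset.range d,
            (if φ (t - d - j) ≠ 0 then e (t - j) ^ 2 / ‖φ (t - d - j)‖ ^ 2 else 0)) := by
  intro t hφ
  set x : ℕ → ℝ := fun j => ρ (t - j - 1) * (|e (t - j)| / ‖φ (t - d - j)‖) with hx
  have hdrift : ‖θhat (t - 1) - θhat (t - d)‖ ≤ ∑ k ∈ range (d - 1), x (k + 1) := by
    have h := norm_sub_le_sum_of_step_le hstep (t - 1) (d - 1)
    rw [Nat.cast_sub hd, Nat.cast_one, sub_sub_sub_cancel_right] at h
    refine h.trans_eq (sum_congr rfl fun k _ => ?_)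
    simp only [hx]
    push_cast
    ring_nf
  have hsum : ∑ j ∈ range d, x j = ∑ k ∈ range (d - 1), x (k + 1) + x 0 := by
    rw [← sum_range_succ', Nat.sub_add_cancel hd]
  have hfirst : |ε t| / ‖φ (t - d)‖ ≤
      ∑ j ∈ range d, x j + (1 - ρ (t - 1)) * (|e t| / ‖φ (t - d)‖) := by
    rw [hε t, hsum]
    refine (abs_add_inner_div_norm_le _ _ _).trans ?_
    simp only [hx, Nat.cast_zero, sub_zero]
    linarith
  refine ⟨hfirst, fun hone => ?_⟩
  have hρ1 : ρ (t - 1) = 1 := by simpa using hone 0 (mem_range.mpr hd) (by simpa using hφ)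
  have hterm : ∀ j ∈ range d, x j ^ 2 ≤
      if φ (t - d - j) ≠ 0 then e (t - j) ^ 2 / ‖φ (t - d - j)‖ ^ 2 else 0 := by
    intro j hj
    by_cases hz : φ (t - d - j) = 0
    · simp [hx, hz]
    · simp [hx, hone j hj hz, hz, div_pow]
  rw [← sq_abs, ← div_pow]
  simpa using sq_le_card_mul_sum_of_le_sum (range d) (by positivity)
    (by simpa [hρ1] using hfirst) hterm

theorem stmt_15 {p : ℕ} (d : ℕ) (hd : 1 ≤ d)
    (φ θhat : ℤ → EuclideanSpace ℝ (Fin p))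
    (ε e : ℤ → ℝ) (ρ : ℤ → ℝ)
    (hρ : ∀ s : ℤ, ρ s = 0 ∨ ρ s = 1)
    (hρ0 : ∀ s : ℤ, φ (s - d + 1) = 0 → ρ s = 0)
    (hε : ∀ t : ℤ, ε t = e t + ⟪φ (t - d), θhat (t - 1) - θhat (t - d)⟫)
    (hstep : ∀ s : ℤ, ‖θhat (s + 1) - θhat s‖ ≤ ρ s * (|e (s + 1)| / ‖φ (s - d + 1)‖)) :
    ∀ t : ℤ, φ (t - d) ≠ 0 →
      (|ε t| / ‖φ (t - d)‖ ≤
        (∑ j ∈ Finset.range d, ρ (t - j - 1) * (|e (t - j)| / ‖φ (t - d - j)‖)) +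
          (1 - ρ (t - 1)) * (|e t| / ‖φ (t - d)‖)) ∧
      ((∀ j ∈ Finset.range d, φ (t - d - j) ≠ 0 → ρ (t - j - 1) = 1) →
        ε t ^ 2 / ‖φ (t - d)‖ ^ 2 ≤
          d * ∑ j ∈ Finset.range d,
            (if φ (t - d - j) ≠ 0 then e (t - j) ^ 2 / ‖φ (t - d - j)‖ ^ 2 else 0)) :=
  stmt_15_general d hd φ θhat ε e ρ hε hstep
end
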